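/- arXiv:2604.02523 — 2 statements merged into one kernel-verified Lean document; each statement's English description precedes it below -/
import Mathlib

section
/- Let ω_n > 0 and ζ > 0 be real numbers. Then the improper integral over ω ∈ ℝ of 1/((ω_n² − ω²)² + 4ζ²ω_n²ω²) dω equals π/(2ζω_n³). -/
/-! Write `quarticDenom a b x = (a - x²)² + b²x² = |a - x² + i b x|²`, so that the integrand
is `1 / quarticDenom (ωn²) (2ζωn)`. It is even, so it suffices to integrate over `(0, ∞)`.
There `y = x - a/x` is a bijection onto `ℝ` with `dy = (1 + a/x²) dx` and
`quarticDenom a b x = x² (y² + b²)`, whence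
`∫₀^∞ (a + x²) / quarticDenom = ∫_ℝ dy / (y² + b²) = π/b`.
The inversion `x ↦ a/x` gives `∫₀^∞ x² / quarticDenom = a ∫₀^∞ 1 / quarticDenom`,
so `∫₀^∞ 1 / quarticDenom = π / (2ab)`. -/

open MeasureTheory Set Real

section Substitution

variable {E : Type*} [NormedAddCommGroup E] [NormedSpace ℝ E] {a : ℝ}

theorem hasDerivAt_sub_div_self (a : ℝ) {x : ℝ} (hx : x ≠ 0) :
    HasDerivAt (fun x => x - a / x) (1 + a / x ^ 2) x := by
  simpa only [div_eq_mul_inv] using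
    ((hasDerivAt_id' x).fun_sub ((hasDerivAt_inv hx).const_mul a)).congr_deriv (by ring)

theorem injOn_sub_div_self (ha : 0 ≤ a) : InjOn (fun x : ℝ => x - a / x) (Ioi 0) := by
  intro x (hx : 0 < x) y (hy : 0 < y) hxy
  have h : (x - y) * (x * y + a) = 0 := by
    field_simp at hxy
    linear_combination hxy
  exact sub_eq_zero.1 ((mul_eq_zero.1 h).resolve_right (by positivity))

theorem image_sub_div_self_Ioi (ha : 0 < a) : (fun x : ℝ => x - a / x) '' Ioi 0 = univ := by
  refine eq_univ_of_forall fun y => ?_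
  -- the positive root of `x² - y x - a`
  obtain ⟨s, hs, hs_sq⟩ : ∃ s, 0 ≤ s ∧ s ^ 2 = y ^ 2 + 4 * a :=
    ⟨_, sqrt_nonneg _, sq_sqrt (by positivity)⟩
  have hys : 0 < y + s := by nlinarith
  refine ⟨(y + s) / 2, mem_Ioi.2 (by linarith), ?_⟩
  field_simp
  linear_combination hs_sq

theorem hasDerivWithinAt_sub_div_self_Ioi :
    ∀ x ∈ Ioi (0 : ℝ), HasDerivWithinAt (fun x => x - a / x) (1 + a / x ^ 2) (Ioi 0) x :=
  fun _ hx => (hasDerivAt_sub_div_self a (ne_of_gt hx)).hasDerivWithinAt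

theorem integrableOn_Ioi_comp_sub_div_self_iff (ha : 0 < a) (g : ℝ → E) :
    IntegrableOn (fun x => (1 + a / x ^ 2) • g (x - a / x)) (Ioi 0) ↔ Integrable g := by
  have := integrableOn_image_iff_integrableOn_abs_deriv_smul measurableSet_Ioi
    hasDerivWithinAt_sub_div_self_Ioi (injOn_sub_div_self ha.le) g
  rw [image_sub_div_self_Ioi ha, integrableOn_univ] at this
  rw [this]
  refine integrableOn_congr_fun (fun x _ => ?_) measurableSet_Ioi
  rw [abs_of_pos (by positivity)]

theorem integral_Ioi_comp_sub_div_self (ha : 0 < a) (g : ℝ → E) :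
    ∫ x in Ioi 0, (1 + a / x ^ 2) • g (x - a / x) = ∫ y, g y := by
  have := integral_image_eq_integral_abs_deriv_smul measurableSet_Ioi
    hasDerivWithinAt_sub_div_self_Ioi (injOn_sub_div_self ha.le) g
  rw [image_sub_div_self_Ioi ha, setIntegral_univ] at this
  rw [this]
  refine setIntegral_congr_fun measurableSet_Ioi fun x _ => ?_
  rw [abs_of_pos (by positivity)]

theorem integral_Ioi_comp_div_self (ha : 0 < a) (g : ℝ → E) :
    ∫ x in Ioi 0, (a / x ^ 2) • g (a / x) = ∫ x in Ioi 0, g x := by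
  have himage : (fun x : ℝ => a / x) '' Ioi 0 = Ioi 0 := by
    refine Subset.antisymm (image_subset_iff.2 fun x (hx : 0 < x) => div_pos ha hx) ?_
    exact fun y hy => ⟨a / y, div_pos ha hy, div_div_cancel₀ ha.ne'⟩
  have hderiv (x : ℝ) (hx : x ∈ Ioi 0) :
      HasDerivWithinAt (fun x => a / x) (-(a / x ^ 2)) (Ioi 0) x := by
    simpa [div_eq_mul_inv] using ((hasDerivAt_inv (ne_of_gt hx)).const_mul a).hasDerivWithinAt
  have hinj : InjOn (fun x : ℝ => a / x) (Ioi 0) := fun x (hx : 0 < x) y (hy : 0 < y) h => by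
    simp only at h
    field_simp at h
    linarith
  have := integral_image_eq_integral_abs_deriv_smul measurableSet_Ioi hderiv hinj g
  rw [himage] at this
  rw [this]
  refine setIntegral_congr_fun measurableSet_Ioi fun x (hx : 0 < x) => ?_
  rw [abs_neg, abs_of_pos (by positivity)]

end Substitution

theorem integrable_inv_sq_add_sq {b : ℝ} (hb : b ≠ 0) :
    Integrable fun x : ℝ => (b ^ 2 + x ^ 2)⁻¹ := by
  have := (integrable_inv_one_add_sq.comp_div hb).const_mul (b ^ 2)⁻¹
  refine this.congr (ae_of_all _ fun x => ?_)
  field_simp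

theorem integral_univ_inv_sq_add_sq {b : ℝ} (hb : 0 < b) :
    ∫ x : ℝ, (b ^ 2 + x ^ 2)⁻¹ = π / b := by
  calc ∫ x : ℝ, (b ^ 2 + x ^ 2)⁻¹ = ∫ x : ℝ, (b ^ 2)⁻¹ * (1 + (x / b) ^ 2)⁻¹ := by
        congr 1 with x; field_simp
    _ = π / b := by
        rw [integral_const_mul, Measure.integral_comp_div (fun x => (1 + x ^ 2)⁻¹),
          integral_univ_inv_one_add_sq, abs_of_pos hb, smul_eq_mul]
        field_simp

def quarticDenom (a b x : ℝ) : ℝ := (a - x ^ 2) ^ 2 + b ^ 2 * x ^ 2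

section QuarticDenom

variable {a b : ℝ}

theorem quarticDenom_pos (ha : 0 < a) (hb : b ≠ 0) (x : ℝ) : 0 < quarticDenom a b x := by
  rcases eq_or_ne x 0 with rfl | hx
  · simpa [quarticDenom] using pow_pos ha 2
  · unfold quarticDenom
    positivity

theorem continuous_quarticDenom (a b : ℝ) : Continuous (quarticDenom a b) := by
  unfold quarticDenom
  fun_prop

theorem quarticDenom_eq_sq_mul {x : ℝ} (hx : x ≠ 0) :
    quarticDenom a b x = x ^ 2 * (b ^ 2 + (x - a / x) ^ 2) := by
  unfold quarticDenom
  field_simp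
  ring

theorem quarticDenom_div {x : ℝ} (ha : a ≠ 0) (hx : x ≠ 0) :
    quarticDenom a b (a / x) = a ^ 2 / x ^ 4 * quarticDenom a b x := by
  unfold quarticDenom
  field_simp
  ring

theorem integrableOn_Ioi_add_sq_div_quarticDenom (ha : 0 < a) (hb : b ≠ 0) :
    IntegrableOn (fun x => (a + x ^ 2) / quarticDenom a b x) (Ioi 0) := by
  refine ((integrableOn_Ioi_comp_sub_div_self_iff ha _).2 (integrable_inv_sq_add_sq hb)).congr_fun
    (fun x (hx : 0 < x) => ?_) measurableSet_Ioi
  simp only [quarticDenom_eq_sq_mul hx.ne', smul_eq_mul]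
  field_simp
  ring

theorem integral_Ioi_add_sq_div_quarticDenom (ha : 0 < a) (hb : 0 < b) :
    ∫ x in Ioi 0, (a + x ^ 2) / quarticDenom a b x = π / b := by
  rw [← integral_univ_inv_sq_add_sq hb, ← integral_Ioi_comp_sub_div_self ha]
  refine setIntegral_congr_fun measurableSet_Ioi fun x (hx : 0 < x) => ?_
  simp only [quarticDenom_eq_sq_mul hx.ne', smul_eq_mul]
  field_simp
  ring

theorem integral_Ioi_sq_div_quarticDenom (ha : 0 < a) (hb : b ≠ 0) :
    ∫ x in Ioi 0, x ^ 2 / quarticDenom a b x = a * ∫ x in Ioi 0, 1 / quarticDenom a b x := by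
  rw [← integral_Ioi_comp_div_self ha, ← integral_const_mul]
  refine setIntegral_congr_fun measurableSet_Ioi fun x (hx : 0 < x) => ?_
  have := (quarticDenom_pos ha hb x).ne'
  rw [quarticDenom_div ha.ne' hx.ne', smul_eq_mul]
  field_simp

theorem integrableOn_Ioi_one_div_quarticDenom (ha : 0 < a) (hb : b ≠ 0) :
    IntegrableOn (fun x => 1 / quarticDenom a b x) (Ioi 0) := by
  refine ((integrableOn_Ioi_add_sq_div_quarticDenom ha hb).div_const a).mono'
    (continuous_const.div (continuous_quarticDenom a b)
      fun x => (quarticDenom_pos ha hb x).ne').aestronglyMeasurable.restrict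
    (ae_of_all _ fun x => ?_)
  have := quarticDenom_pos ha hb x
  rw [norm_of_nonneg (by positivity), div_div, div_le_div_iff₀ this (by positivity)]
  nlinarith [mul_nonneg (sq_nonneg x) this.le]

theorem integral_Ioi_one_div_quarticDenom (ha : 0 < a) (hb : 0 < b) :
    ∫ x in Ioi 0, 1 / quarticDenom a b x = π / (2 * a * b) := by
  have hint := integrableOn_Ioi_one_div_quarticDenom ha hb.ne'
  have hsplit : ∫ x in Ioi 0, x ^ 2 / quarticDenom a b x
      = (∫ x in Ioi 0, (a + x ^ 2) / quarticDenom a b x)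
        - a * ∫ x in Ioi 0, 1 / quarticDenom a b x := by
    rw [← integral_const_mul,
      ← integral_sub (integrableOn_Ioi_add_sq_div_quarticDenom ha hb.ne') (hint.const_mul a)]
    refine setIntegral_congr_fun measurableSet_Ioi fun x _ => ?_
    ring
  rw [integral_Ioi_add_sq_div_quarticDenom ha hb, integral_Ioi_sq_div_quarticDenom ha hb.ne',
    eq_sub_iff_add_eq, eq_div_iff hb.ne'] at hsplit
  rw [eq_div_iff (by positivity)]
  linarith

theorem integral_one_div_quarticDenom (ha : 0 < a) (hb : 0 < b) :
    ∫ x, 1 / quarticDenom a b x = π / (a * b) := by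
  have heven : ∀ x, quarticDenom a b |x| = quarticDenom a b x := by simp [quarticDenom]
  calc ∫ x, 1 / quarticDenom a b x = ∫ x, 1 / quarticDenom a b |x| := by simp only [heven]
    _ = 2 * ∫ x in Ioi 0, 1 / quarticDenom a b x :=
      integral_comp_abs (f := fun x => 1 / quarticDenom a b x)
    _ = π / (a * b) := by
      rw [integral_Ioi_one_div_quarticDenom ha hb]
      field_simp

end QuarticDenom

/-- For `ωn, ζ > 0`, the improper integral over `ω ∈ ℝ` of
`1/((ωn² − ω²)² + 4ζ²ωn²ω²)` equals `π/(2ζωn³)`. -/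
theorem integral_squared_frequency_response
    (ωn ζ : ℝ) (hωn : 0 < ωn) (hζ : 0 < ζ) :
    ∫ ω : ℝ, 1 / ((ωn ^ 2 - ω ^ 2) ^ 2 + 4 * ζ ^ 2 * ωn ^ 2 * ω ^ 2)
      = Real.pi / (2 * ζ * ωn ^ 3) := by
  have hden : ∀ ω : ℝ, (ωn ^ 2 - ω ^ 2) ^ 2 + 4 * ζ ^ 2 * ωn ^ 2 * ω ^ 2
      = quarticDenom (ωn ^ 2) (2 * ζ * ωn) ω := fun ω => by unfold quarticDenom; ring
  simp_rw [hden]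
  rw [integral_one_div_quarticDenom (by positivity) (by positivity)]
  ring
end

section
/- Let m, K_p, K_d > 0 and σ ∈ ℝ, and define ω_n = √(K_p/m) and ζ = K_d/(2√(m·K_p)). Then (ω_n⁴σ²)/(2π) multiplied by the integral over ω ∈ ℝ of 1/((ω_n² − ω²)² + 4ζ²ω_n²ω²) dω equals σ²·K_p/(2K_d). In particular, this value is independent of the mass m. -/
/-!
Write `D(x) = (a - x²)² + b²x²`. The inversion `x ↦ a / x` of `(0, ∞)` satisfies
`D(a / x) = a² D(x) / x⁴`, so `∫₀^∞ x² / D = a ∫₀^∞ 1 / D` and hence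
`2a ∫₀^∞ 1 / D = ∫₀^∞ (x² + a) / D`. The last integrand has the antiderivative
`arctan ((x - a / x) / b) / b`, which increases from `-π / (2b)` to `π / (2b)` on `(0, ∞)`.
By evenness `∫ 1 / D = π / (ab)`, and with `a = ωn²`, `b = 2ζωn` and `ωn / ζ = 2Kp / Kd`
the claim follows.
-/

open MeasureTheory Real Set Filter Topology

theorem integral_Ioi_comp_div {E : Type*} [NormedAddCommGroup E] [NormedSpace ℝ E]
    (f : ℝ → E) {c : ℝ} (hc : 0 < c) :
    ∫ x in Ioi 0, (c / x ^ 2) • f (c / x) = ∫ x in Ioi 0, f x := by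
  have himage : (c / ·) '' Ioi (0 : ℝ) = Ioi 0 := by
    refine (image_subset_iff.mpr fun x (hx : 0 < x) ↦ div_pos hc hx).antisymm
      fun y (hy : 0 < y) ↦ ⟨c / y, div_pos hc hy, div_div_cancel₀ hc.ne'⟩
  have hderiv : ∀ x ∈ Ioi (0 : ℝ), HasDerivWithinAt (c / ·) (-(c / x ^ 2)) (Ioi 0) x := by
    intro x hx
    simpa only [div_eq_mul_inv, neg_mul_eq_mul_neg] using
      ((hasDerivAt_inv (ne_of_gt hx)).const_mul c).hasDerivWithinAt
  have hinj : InjOn (c / ·) (Ioi (0 : ℝ)) := fun x _ y _ hxy ↦ by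
    simpa only [div_div_cancel₀ hc.ne'] using congrArg (c / ·) hxy
  conv_rhs =>
    rw [← himage, integral_image_eq_integral_abs_deriv_smul measurableSet_Ioi hderiv hinj]
  refine setIntegral_congr_fun measurableSet_Ioi fun x (hx : 0 < x) ↦ ?_
  rw [abs_neg, abs_of_pos (by positivity)]

theorem integral_Ioi_of_hasDerivAt_of_tendsto_nhdsGT_of_nonneg {f f' : ℝ → ℝ} {a l₀ l₁ : ℝ}
    (hderiv : ∀ x ∈ Ioi a, HasDerivAt f (f' x) x) (hnonneg : ∀ x ∈ Ioi a, 0 ≤ f' x)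
    (hbot : Tendsto f (𝓝[>] a) (𝓝 l₀)) (htop : Tendsto f atTop (𝓝 l₁)) :
    IntegrableOn f' (Ioi a) ∧ ∫ x in Ioi a, f' x = l₁ - l₀ := by
  classical
  set g := Function.update f a l₀
  have hcont : ContinuousWithinAt g (Ici a) a := by
    rwa [continuousWithinAt_update_same, Ici_sdiff_left]
  have hderiv' : ∀ x ∈ Ioi a, HasDerivAt g (f' x) x := fun x (hx : a < x) ↦
    (hderiv x hx).congr_of_eventuallyEq <| by
      filter_upwards [eventually_ne_nhds hx.ne'] with y hy using Function.update_of_ne hy _ _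
  have htop' : Tendsto g atTop (𝓝 l₁) := htop.congr' <| by
    filter_upwards [eventually_ne_atTop a] with y hy using (Function.update_of_ne hy _ _).symm
  refine ⟨integrableOn_Ioi_deriv_of_nonneg hcont hderiv' hnonneg htop', ?_⟩
  simp [integral_Ioi_of_hasDerivAt_of_nonneg hcont hderiv' hnonneg htop', g]

/-- `|a - x² + i b x|²`, the squared modulus of the characteristic polynomial `s² + b s + a`
at `s = i x`. -/
def charPolyNormSq (a b x : ℝ) : ℝ := (a - x ^ 2) ^ 2 + b ^ 2 * x ^ 2

section charPolyNormSq

variable {a b : ℝ}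

theorem charPolyNormSq_pos (ha : a ≠ 0) (hb : b ≠ 0) (x : ℝ) : 0 < charPolyNormSq a b x := by
  unfold charPolyNormSq
  rcases eq_or_ne x 0 with rfl | hx
  · simpa using sq_pos_of_ne_zero ha
  · positivity

theorem charPolyNormSq_abs (x : ℝ) : charPolyNormSq a b |x| = charPolyNormSq a b x := by
  simp only [charPolyNormSq, sq_abs]

theorem charPolyNormSq_div_self {x : ℝ} (hx : x ≠ 0) :
    charPolyNormSq a b (a / x) = a ^ 2 / x ^ 4 * charPolyNormSq a b x := by
  unfold charPolyNormSq
  field_simp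
  ring

theorem hasDerivAt_arctan_sub_div {x : ℝ} (hb : b ≠ 0) (hx : x ≠ 0) :
    HasDerivAt (fun y ↦ arctan ((y - a / y) / b) / b) ((x ^ 2 + a) / charPolyNormSq a b x) x := by
  have hinner : HasDerivAt (fun y ↦ (y - a / y) / b) ((1 + a / x ^ 2) / b) x := by
    have := ((hasDerivAt_id x).sub ((hasDerivAt_inv hx).const_mul a)).div_const b
    simpa [div_eq_mul_inv] using this
  refine (hinner.arctan.div_const b).congr_deriv ?_
  have : 0 < charPolyNormSq a b x := by unfold charPolyNormSq; positivity
  unfold charPolyNormSq at *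
  field_simp
  ring

theorem continuous_charPolyNormSq : Continuous (charPolyNormSq a b) := by
  unfold charPolyNormSq
  fun_prop

theorem integral_Ioi_add_div_charPolyNormSq (ha : 0 < a) (hb : 0 < b) :
    IntegrableOn (fun x ↦ (x ^ 2 + a) / charPolyNormSq a b x) (Ioi 0) ∧
      ∫ x in Ioi 0, (x ^ 2 + a) / charPolyNormSq a b x = π / b := by
  have hinner_top : Tendsto (fun y ↦ (y - a / y) / b) atTop atTop := by
    have h : Tendsto (fun y ↦ -(a / y)) atTop (𝓝 0) := by
      simpa using (tendsto_const_nhds (x := a)).div_atTop tendsto_id |>.neg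
    simpa only [sub_eq_add_neg, id] using (tendsto_id.atTop_add h).atTop_div_const hb
  have hinner_zero : Tendsto (fun y ↦ (y - a / y) / b) (𝓝[>] 0) atBot := by
    have h : Tendsto (fun y ↦ -(a / y)) (𝓝[>] 0) atBot := by
      simpa only [div_eq_mul_inv, Function.comp_def] using
        tendsto_neg_atTop_atBot.comp (tendsto_inv_nhdsGT_zero.const_mul_atTop ha)
    simpa only [sub_eq_add_neg, id] using
      ((tendsto_id.mono_left nhdsWithin_le_nhds).add_atBot h).atBot_div_const hb
  obtain ⟨hint, hval⟩ := integral_Ioi_of_hasDerivAt_of_tendsto_nhdsGT_of_nonneg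
    (fun x (hx : 0 < x) ↦ hasDerivAt_arctan_sub_div (a := a) hb.ne' hx.ne')
    (fun x _ ↦ div_nonneg (by positivity) (charPolyNormSq_pos ha.ne' hb.ne' x).le)
    ((tendsto_arctan_atBot.mono_right nhdsWithin_le_nhds).comp hinner_zero |>.div_const b)
    ((tendsto_arctan_atTop.mono_right nhdsWithin_le_nhds).comp hinner_top |>.div_const b)
  exact ⟨hint, hval.trans (by ring)⟩

theorem integral_Ioi_one_div_charPolyNormSq (ha : 0 < a) (hb : 0 < b) :
    ∫ x in Ioi 0, 1 / charPolyNormSq a b x = π / (2 * a * b) := by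
  obtain ⟨hint, hval⟩ := integral_Ioi_add_div_charPolyNormSq ha hb
  have hD x : 0 < charPolyNormSq a b x := charPolyNormSq_pos ha.ne' hb.ne' x
  have hmeas {p : ℝ → ℝ} (hp : Continuous p) :
      AEStronglyMeasurable (fun x ↦ p x / charPolyNormSq a b x) (volume.restrict (Ioi 0)) :=
    (hp.div continuous_charPolyNormSq fun x ↦ (hD x).ne').aestronglyMeasurable
  have hI : IntegrableOn (fun x ↦ 1 / charPolyNormSq a b x) (Ioi 0) :=
    (hint.const_mul a⁻¹).mono' (hmeas continuous_const) <| .of_forall fun x ↦ by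
      have := hD x
      rw [norm_of_nonneg (by positivity), ← mul_div_assoc]
      gcongr
      rw [le_inv_mul_iff₀ ha]
      nlinarith [sq_nonneg x]
  have hJ : IntegrableOn (fun x ↦ x ^ 2 / charPolyNormSq a b x) (Ioi 0) :=
    hint.mono' (hmeas (by fun_prop)) <| .of_forall fun x ↦ by
      have := hD x
      rw [norm_of_nonneg (by positivity)]
      gcongr
      linarith
  have hinv : ∫ x in Ioi 0, x ^ 2 / charPolyNormSq a b x =
      a * ∫ x in Ioi 0, 1 / charPolyNormSq a b x := by
    rw [← integral_Ioi_comp_div _ ha, ← integral_const_mul]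
    refine setIntegral_congr_fun measurableSet_Ioi fun x (hx : 0 < x) ↦ ?_
    rw [smul_eq_mul, charPolyNormSq_div_self hx.ne']
    have := hD x
    field_simp
  have hsum : (∫ x in Ioi 0, x ^ 2 / charPolyNormSq a b x) +
      a * ∫ x in Ioi 0, 1 / charPolyNormSq a b x = π / b := by
    rw [← integral_const_mul, ← integral_add hJ (hI.const_mul a), ← hval]
    refine setIntegral_congr_fun measurableSet_Ioi fun x _ ↦ ?_
    ring
  rw [hinv] at hsum
  field_simp at hsum ⊢
  linarith

theorem integral_one_div_charPolyNormSq (ha : 0 < a) (hb : 0 < b) :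
    ∫ x, 1 / charPolyNormSq a b x = π / (a * b) := by
  have := integral_comp_abs (f := fun x ↦ 1 / charPolyNormSq a b x)
  simp only [charPolyNormSq_abs] at this
  rw [this, integral_Ioi_one_div_charPolyNormSq ha hb]
  field_simp

end charPolyNormSq

/-- Steady-state position error variance under white-noise action errors:
`(ωn⁴σ²)/(2π) · ∫ 1/((ωn² − ω²)² + 4ζ²ωn²ω²) dω = σ²·Kp/(2Kd)`,
independent of the mass `m`. -/
theorem error_variance_eq_gain_ratio
    (m Kp Kd : ℝ) (hm : 0 < m) (hKp : 0 < Kp) (hKd : 0 < Kd) (σ : ℝ)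
    (ωn ζ : ℝ)
    (hωn : ωn = Real.sqrt (Kp / m))
    (hζ : ζ = Kd / (2 * Real.sqrt (m * Kp))) :
    (ωn ^ 4 * σ ^ 2) / (2 * Real.pi) *
      ∫ ω : ℝ, 1 / ((ωn ^ 2 - ω ^ 2) ^ 2 + 4 * ζ ^ 2 * ωn ^ 2 * ω ^ 2)
      = σ ^ 2 * Kp / (2 * Kd) := by
  have hωn_pos : 0 < ωn := hωn ▸ sqrt_pos.mpr (div_pos hKp hm)
  have hζ_pos : 0 < ζ := hζ ▸ by positivity
  have hratio : ωn * Kd = 2 * ζ * Kp := by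
    rw [hωn, hζ, sqrt_div' _ hm.le, sqrt_mul hm.le]
    field_simp
    rw [sq_sqrt hKp.le]
  have hdenom (ω : ℝ) : (ωn ^ 2 - ω ^ 2) ^ 2 + 4 * ζ ^ 2 * ωn ^ 2 * ω ^ 2 =
      charPolyNormSq (ωn ^ 2) (2 * ζ * ωn) ω := by
    unfold charPolyNormSq
    ring
  simp only [hdenom]
  rw [integral_one_div_charPolyNormSq (by positivity) (by positivity)]
  field_simp
  linear_combination σ ^ 2 * hratio
end
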